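/- arXiv:2103.04752 — 2 statements merged into one kernel-verified Lean document; each statement's English description precedes it below -/
import Mathlib

section
/- With Γ ≤ G, ρ(Γ) ⊆ Γ, χ : Γ → U(1), (ρ,τ) an equivariant pair with τ C^∞, ν, μ ∈ ℝ, B := ν + μ(|∂τ/∂z(0)|² − |∂τ/∂z̄(0)|²), φ a C^∞ real gauge (i.e. i·Dφ(z)(v) = −(1/2)(conj(S(z))·v − S(z)·conj(v)) + (B/2)(conj(z)·v − z·conj(v)) for all z, v), χ_τ(γ) := χ(γ)·exp(i(φ(γ·0) − φ(0)))·j^{ν−B}(γ,0)·j^{μ}(ρ(γ),τ(0)), and λ ∈ ℂ: a C^∞ function F : ℂ → ℂ satisfies both F(γ·z) = χ(γ)·j^ν(γ,z)·j^μ(ρ(γ),τ(z))·F(z) for all γ ∈ Γ, z ∈ ℂ, and Δ^{ν,μ}_τ F = λ·F, if and only if G_F := exp(iφ)·F satisfies both G_F(γ·z) = χ_τ(γ)·j^{B}(γ,z)·G_F(z) for all γ ∈ Γ, z ∈ ℂ, and Δ_B G_F = λ·G_F. -/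
/-!
Equivariance forces `τ` to be affine in `z, z̄`: `ρ` acts trivially on the translations of `G`,
so `τ - τ 0` is additive, hence `ℝ`-linear by continuity, `τ z = a + c z + d z̄`. Then
`S z = B z + s` with the constant field `B`, the Laplacians of `τ, τ̄` vanish, and the gauge
condition integrates to `φ z = φ 0 - Im (s̄ z)`, i.e. `e^{iφ} = exp (i φ 0 - s̄ z / 2 + s z̄ / 2)`.
Conjugating the magnetic Laplacian with potential `B z` by this factor shifts the potential to
`B z + s`, which turns `Δ_B (e^{iφ} F)` into `e^{iφ} Δ^{ν,μ}_τ F`.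

For `γ = [u, b]` and `ρ γ = [u', b']`, equivariance of `τ` reads `c u = u' c`, `d ū = u' d`
and determines `b'`; under these relations the phase of `e^{iφ(γ·z)} j^ν(γ,z) j^μ(ργ,τ z)`
equals that of `χ_τ(γ) χ(γ)⁻¹ j^B(γ,z) e^{iφ(z)}`.
-/

open Complex MeasureTheory ComplexConjugate

noncomputable section

/-- The group `G = U(1) ⋉ ℂ`, as pairs `[a, b]` with `a ∈ U(1)`, `b ∈ ℂ`. -/
abbrev G1 : Type := Circle × ℂ

/-- Multiplication `[a,b][a',b'] = [aa', ab' + b]` in `G`. -/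
def Gmul (g h : G1) : G1 := (g.1 * h.1, (g.1 : ℂ) * h.2 + g.2)

/-- Inverse `[a,b]⁻¹ = [a⁻¹, -a⁻¹ b]` in `G`. -/
def Ginv (g : G1) : G1 := (g.1⁻¹, -((g.1⁻¹ : Circle) : ℂ) * g.2)

/-- The action `[a,b]·z = a z + b` of `G` on `ℂ`. -/
def Gact (g : G1) (z : ℂ) : ℂ := (g.1 : ℂ) * z + g.2

/-- `ρ : G → G` is a group homomorphism. -/
def IsGHom (ρ : G1 → G1) : Prop := ∀ g h, ρ (Gmul g h) = Gmul (ρ g) (ρ h)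

/-- `(ρ, τ)` is an equivariant pair: `ρ` is a `G`-endomorphism and
`τ(g·z) = ρ(g)·τ(z)` for all `g ∈ G`, `z ∈ ℂ`. -/
def Equivariant (ρ : G1 → G1) (τ : ℂ → ℂ) : Prop :=
  IsGHom ρ ∧ ∀ g z, τ (Gact g z) = Gact (ρ g) (τ z)

/-- The automorphy factor `j^α(g,z) = exp(-iα Im(z conj(g⁻¹·0)))`. -/
def jfac (α : ℝ) (g : G1) (z : ℂ) : ℂ :=
  Complex.exp (-Complex.I * α * ((z * conj (Gact (Ginv g) 0)).im : ℝ))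

/-- Wirtinger derivative `∂f/∂z`. -/
def wdz (f : ℂ → ℂ) (z : ℂ) : ℂ :=
  (1/2 : ℂ) * (fderiv ℝ f z 1 - Complex.I * fderiv ℝ f z Complex.I)

/-- Wirtinger derivative `∂f/∂z̄`. -/
def wdzbar (f : ℂ → ℂ) (z : ℂ) : ℂ :=
  (1/2 : ℂ) * (fderiv ℝ f z 1 + Complex.I * fderiv ℝ f z Complex.I)

/-- `S(z) = νz + μ(τ(z) ∂τ̄/∂z̄(z) − τ̄(z) ∂τ/∂z̄(z))`. -/
def Sfun (ν μ : ℝ) (τ : ℂ → ℂ) (z : ℂ) : ℂ :=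
  (ν : ℂ) * z + (μ : ℂ) * (τ z * wdzbar (fun w => conj (τ w)) z - conj (τ z) * wdzbar τ z)

/-- Euclidean Laplacian `Δh = 4 ∂²h/∂z∂z̄`. -/
def lap (f : ℂ → ℂ) (z : ℂ) : ℂ := 4 * wdz (wdzbar f) z

/-- The mixed magnetic Schrödinger operator `Δ^{ν,μ}_τ`. -/
def DeltaTau (ν μ : ℝ) (τ f : ℂ → ℂ) (z : ℂ) : ℂ :=
  lap f z
    + 2 * (Sfun ν μ τ z * wdz f z - conj (Sfun ν μ τ z) * wdzbar f z)
    - (‖Sfun ν μ τ z‖ : ℂ)^2 * f z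
    + (μ : ℂ) * (τ z * lap (fun w => conj (τ w)) z - conj (τ z) * lap τ z) * f z

/-- The Landau Hamiltonian `Δ_B`. -/
def DeltaB (B : ℝ) (f : ℂ → ℂ) (z : ℂ) : ℂ :=
  lap f z + 2 * (B : ℂ) * (z * wdz f z - conj z * wdzbar f z)
    - (B : ℂ)^2 * (‖z‖ : ℂ)^2 * f z

/-- The magnetic field `B(z) = ν + μ(|∂τ/∂z|² − |∂τ/∂z̄|²)`. -/
def Bfield (ν μ : ℝ) (τ : ℂ → ℂ) (z : ℂ) : ℝ :=
  ν + μ * ((‖wdz τ z‖)^2 - (‖wdzbar τ z‖)^2)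

/-- `φ : ℂ → ℝ` is a smooth gauge: `θ^{ν,μ}_τ = θ_B + i dφ`, i.e.
`i·Dφ(z)(v) = −(1/2)(conj(S(z))v − S(z)conj(v)) + (B/2)(z̄v − z v̄)`. -/
def IsGauge (ν μ B : ℝ) (τ : ℂ → ℂ) (φ : ℂ → ℝ) : Prop :=
  ContDiff ℝ (⊤ : ℕ∞) φ ∧ ∀ z v : ℂ,
    Complex.I * ((fderiv ℝ φ z v : ℝ) : ℂ) =
      -(1/2 : ℂ) * (conj (Sfun ν μ τ z) * v - Sfun ν μ τ z * conj v)
      + ((B : ℂ)/2) * (conj z * v - z * conj v)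

/-- The pseudo-character
`χ_τ(γ) = χ(γ) exp(i(φ(γ·0) − φ(0))) j^{ν−B}(γ,0) j^μ(ρ(γ),τ(0))`. -/
def chiTau (ν μ B : ℝ) (ρ : G1 → G1) (τ : ℂ → ℂ) (φ : ℂ → ℝ) (χ : G1 → Circle)
    (γ : G1) : ℂ :=
  (χ γ : ℂ) * Complex.exp (Complex.I * ((φ (Gact γ 0) - φ 0 : ℝ) : ℂ)) *
    jfac (ν - B) γ 0 * jfac μ (ρ γ) (τ 0)

section Wirtinger

variable {f g : ℂ → ℂ} {z : ℂ}

theorem wdz_eq_of_fderiv_apply {c d : ℂ} (h : ∀ v, fderiv ℝ f z v = c * v + d * conj v) :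
    wdz f z = c := by
  simp only [wdz, h, map_one, conj_I]
  linear_combination (d - c) / 2 * I_sq

theorem wdzbar_eq_of_fderiv_apply {c d : ℂ} (h : ∀ v, fderiv ℝ f z v = c * v + d * conj v) :
    wdzbar f z = d := by
  simp only [wdzbar, h, map_one, conj_I]
  linear_combination (c - d) / 2 * I_sq

theorem wdz_const (a : ℂ) : wdz (fun _ => a) z = 0 := by
  simp [wdz]

theorem wdz_add (hf : DifferentiableAt ℝ f z) (hg : DifferentiableAt ℝ g z) :
    wdz (fun w => f w + g w) z = wdz f z + wdz g z := by
  simp only [wdz, fderiv_fun_add hf hg, add_apply]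
  ring

theorem wdz_const_mul (a : ℂ) (hf : DifferentiableAt ℝ f z) :
    wdz (fun w => a * f w) z = a * wdz f z := by
  simp only [wdz, fderiv_const_mul hf a, smul_apply, smul_eq_mul]
  ring

theorem wdz_mul (hf : DifferentiableAt ℝ f z) (hg : DifferentiableAt ℝ g z) :
    wdz (fun w => f w * g w) z = wdz f z * g z + f z * wdz g z := by
  simp only [wdz, fderiv_fun_mul hf hg, add_apply, smul_apply, smul_eq_mul]
  ring

theorem wdzbar_mul (hf : DifferentiableAt ℝ f z) (hg : DifferentiableAt ℝ g z) :
    wdzbar (fun w => f w * g w) z = wdzbar f z * g z + f z * wdzbar g z := by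
  simp only [wdzbar, fderiv_fun_mul hf hg, add_apply, smul_apply, smul_eq_mul]
  ring

theorem differentiable_wdzbar (hf : ContDiff ℝ 2 f) : Differentiable ℝ (wdzbar f) := by
  have hDf : ContDiff ℝ 1 (fderiv ℝ f) := hf.fderiv_right le_rfl
  have hDf_apply (v : ℂ) : Differentiable ℝ fun w => fderiv ℝ f w v :=
    (hDf.clm_apply contDiff_const).differentiable one_ne_zero
  unfold wdzbar
  fun_prop

theorem hasFDerivAt_affine (a c d : ℂ) :
    HasFDerivAt (fun w => a + c * w + d * conj w)
      (c • ContinuousLinearMap.id ℝ ℂ + d • (conjCLE : ℂ →L[ℝ] ℂ)) z := by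
  simpa [add_assoc] using
    ((c • ContinuousLinearMap.id ℝ ℂ + d • (conjCLE : ℂ →L[ℝ] ℂ)).hasFDerivAt (x := z)).const_add a

theorem fderiv_affine_apply (a c d v : ℂ) :
    fderiv ℝ (fun w => a + c * w + d * conj w) z v = c * v + d * conj v := by
  simp [(hasFDerivAt_affine a c d).fderiv]

theorem wdz_affine (a c d : ℂ) : wdz (fun w => a + c * w + d * conj w) z = c :=
  wdz_eq_of_fderiv_apply (fderiv_affine_apply a c d)

theorem wdzbar_affine (a c d : ℂ) : wdzbar (fun w => a + c * w + d * conj w) z = d :=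
  wdzbar_eq_of_fderiv_apply (fderiv_affine_apply a c d)

end Wirtinger

theorem clm_apply_eq_mul_add_mul_conj (L : ℂ →L[ℝ] ℂ) (w : ℂ) :
    L w = (L 1 - I * L I) / 2 * w + (L 1 + I * L I) / 2 * conj w := by
  have hw : L w = w.re * L 1 + w.im * L I := by
    conv_lhs => rw [← re_add_im w, ← mul_one (w.re : ℂ)]
    simp only [← real_smul, map_add, map_smul]
  rw [hw]
  conv_rhs => rw [← re_add_im w]
  simp only [map_add, map_mul, conj_ofReal, conj_I]
  linear_combination (w.im * L I) * I_sq

def magneticLaplacian (S f : ℂ → ℂ) (z : ℂ) : ℂ :=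
  lap f z + 2 * (S z * wdz f z - conj (S z) * wdzbar f z) - (‖S z‖ : ℂ) ^ 2 * f z

theorem DeltaB_eq_magneticLaplacian (B : ℝ) (f : ℂ → ℂ) (z : ℂ) :
    DeltaB B f z = magneticLaplacian (fun w => B * w) f z := by
  simp only [DeltaB, magneticLaplacian, ← mul_conj', map_mul, conj_ofReal]
  ring

section GaugeFactor

variable {F : ℂ → ℂ} {z : ℂ} (r p q : ℂ)

theorem fderiv_cexp_affine_apply (v : ℂ) :
    fderiv ℝ (fun w => cexp (r + p * w + q * conj w)) z v =
      cexp (r + p * z + q * conj z) * (p * v + q * conj v) := by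
  simp [(hasFDerivAt_affine r p q).cexp.fderiv, mul_add]

theorem wdz_cexp_affine_mul (hF : DifferentiableAt ℝ F z) :
    wdz (fun w => cexp (r + p * w + q * conj w) * F w) z =
      cexp (r + p * z + q * conj z) * (p * F z + wdz F z) := by
  rw [wdz_mul (hasFDerivAt_affine r p q).cexp.differentiableAt hF,
    wdz_eq_of_fderiv_apply (c := p * cexp (r + p * z + q * conj z))
      (d := q * cexp (r + p * z + q * conj z)) fun v => by rw [fderiv_cexp_affine_apply]; ring]
  ring

theorem wdzbar_cexp_affine_mul (hF : DifferentiableAt ℝ F z) :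
    wdzbar (fun w => cexp (r + p * w + q * conj w) * F w) z =
      cexp (r + p * z + q * conj z) * (q * F z + wdzbar F z) := by
  rw [wdzbar_mul (hasFDerivAt_affine r p q).cexp.differentiableAt hF,
    wdzbar_eq_of_fderiv_apply (c := p * cexp (r + p * z + q * conj z))
      (d := q * cexp (r + p * z + q * conj z)) fun v => by rw [fderiv_cexp_affine_apply]; ring]
  ring

theorem lap_cexp_affine_mul (hF : ContDiff ℝ 2 F) :
    lap (fun w => cexp (r + p * w + q * conj w) * F w) z =
      cexp (r + p * z + q * conj z) *
        (lap F z + 4 * (q * wdz F z + p * wdzbar F z + p * q * F z)) := by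
  have hF' : Differentiable ℝ F := hF.differentiable two_ne_zero
  have hFbar : Differentiable ℝ (wdzbar F) := differentiable_wdzbar hF
  have hbar : wdzbar (fun w => cexp (r + p * w + q * conj w) * F w) =
      fun w => cexp (r + p * w + q * conj w) * (q * F w + wdzbar F w) :=
    funext fun w => wdzbar_cexp_affine_mul r p q (hF' w)
  rw [lap, hbar, wdz_cexp_affine_mul (F := fun w => q * F w + wdzbar F w) r p q
      (((hF' z).const_mul q).add (hFbar z)), wdz_add ((hF' z).const_mul q) (hFbar z),
    wdz_const_mul q (hF' z), lap]
  ring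

theorem magneticLaplacian_cexp_mul (B : ℝ) (s : ℂ) (hF : ContDiff ℝ 2 F) :
    magneticLaplacian (fun w => B * w)
        (fun w => cexp (r + -conj s / 2 * w + s / 2 * conj w) * F w) z =
      cexp (r + -conj s / 2 * z + s / 2 * conj z) *
        magneticLaplacian (fun w => B * w + s) F z := by
  have hF' : DifferentiableAt ℝ F z := hF.differentiable two_ne_zero z
  simp only [magneticLaplacian, lap_cexp_affine_mul _ _ _ hF, wdz_cexp_affine_mul _ _ _ hF',
    wdzbar_cexp_affine_mul _ _ _ hF', ← mul_conj', map_add, map_mul, conj_ofReal]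
  ring

end GaugeFactor

section AffineSymbol

variable (a c d : ℂ) {z : ℂ}

theorem conj_affine :
    (fun w => conj (a + c * w + d * conj w)) = fun w => conj a + conj d * w + conj c * conj w := by
  funext w
  simp only [map_add, map_mul, conj_conj]
  ring

theorem lap_affine : lap (fun w => a + c * w + d * conj w) z = 0 := by
  rw [lap, show wdzbar (fun w => a + c * w + d * conj w) = fun _ => d from
    funext fun _ => wdzbar_affine a c d, wdz_const, mul_zero]

theorem Bfield_affine (ν μ : ℝ) :
    Bfield ν μ (fun w => a + c * w + d * conj w) z = ν + μ * (‖c‖ ^ 2 - ‖d‖ ^ 2) := by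
  rw [Bfield, wdz_affine, wdzbar_affine]

theorem Sfun_affine (ν μ : ℝ) :
    Sfun ν μ (fun w => a + c * w + d * conj w) z =
      (Bfield ν μ (fun w => a + c * w + d * conj w) 0 : ℂ) * z + μ * (conj c * a - d * conj a) := by
  rw [Sfun, conj_affine, wdzbar_affine, wdzbar_affine, Bfield_affine]
  push_cast
  simp only [← mul_conj', map_add, map_mul, conj_conj]
  ring

theorem DeltaTau_affine (ν μ : ℝ) (F : ℂ → ℂ) :
    DeltaTau ν μ (fun w => a + c * w + d * conj w) F z =
      magneticLaplacian (Sfun ν μ fun w => a + c * w + d * conj w) F z := by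
  rw [DeltaTau, magneticLaplacian, conj_affine, lap_affine, lap_affine]
  ring

end AffineSymbol

/-- `b ↦ (ρ (1, b)).1` is a character of `(ℂ, +)`, even because conjugating by the rotation `-1`
negates translations; hence `A b = A (b / 2) * A (-(b / 2)) = 1`. -/
theorem IsGHom.fst_map_translation {ρ : G1 → G1} (hρ : IsGHom ρ) (b : ℂ) : (ρ (1, b)).1 = 1 := by
  set A : ℂ → Circle := fun b => (ρ (1, b)).1
  have hadd (x y : ℂ) : A (x + y) = A x * A y := by
    simpa [A, Gmul, add_comm] using congrArg Prod.fst (hρ (1, x) (1, y))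
  have hneg (x : ℂ) : A (-x) = A x := by
    set e := Circle.exp Real.pi
    have hleft : Gmul (e, 0) (1, x) = (e, -x) := by simp [Gmul, e]
    have hright : Gmul (1, -x) (e, 0) = (e, -x) := by simp [Gmul]
    have h1 := congrArg Prod.fst (hρ (e, 0) (1, x))
    have h2 := congrArg Prod.fst (hρ (1, -x) (e, 0))
    rw [hleft] at h1
    rw [hright] at h2
    simp only [Gmul] at h1 h2
    exact mul_right_cancel (h2.symm.trans (h1.trans (mul_comm _ _)))
  have hzero : A 0 = 1 := left_eq_mul.mp (by simpa only [add_zero] using hadd 0 0)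
  show A b = 1
  calc A b = A (b / 2) * A (b / 2) := by rw [← hadd, add_halves]
    _ = A (b / 2) * A (-(b / 2)) := by rw [hneg]
    _ = 1 := by rw [← hadd, add_neg_cancel, hzero]

theorem Equivariant.exists_affine {ρ : G1 → G1} {τ : ℂ → ℂ} (h : Equivariant ρ τ)
    (hτ : Continuous τ) : ∃ a c d : ℂ, τ = fun w => a + c * w + d * conj w := by
  obtain ⟨hρ, hτρ⟩ := h
  have htrans (z b : ℂ) : τ (z + b) = τ z + (ρ (1, b)).2 := by
    simpa [Gact, hρ.fst_map_translation b, add_comm] using hτρ (1, b) z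
  let L : ℂ →+ ℂ :=
    { toFun := fun w => τ w - τ 0
      map_zero' := sub_self _
      map_add' := fun x y => by
        have h0 := htrans 0 y
        rw [zero_add] at h0
        simp only [htrans x y]
        linear_combination -h0 }
  let Lℝ := L.toRealLinearMap (hτ.sub continuous_const)
  refine ⟨τ 0, (Lℝ 1 - I * Lℝ I) / 2, (Lℝ 1 + I * Lℝ I) / 2, funext fun w => ?_⟩
  rw [add_assoc, ← clm_apply_eq_mul_add_mul_conj]
  simp [Lℝ, L]

theorem Equivariant.affine_coeff_relations {ρ : G1 → G1} {a c d : ℂ}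
    (h : Equivariant ρ fun w => a + c * w + d * conj w) (g : G1) :
    c * g.1 = (ρ g).1 * c ∧ d * conj (g.1 : ℂ) = (ρ g).1 * d ∧
      (ρ g).2 = a + c * g.2 + d * conj g.2 - (ρ g).1 * a := by
  have e (z : ℂ) := h.2 g z
  have e0 := e 0
  have e1 := e 1
  have eI := e I
  simp only [Gact, map_add, map_mul, conj_I, mul_zero, map_zero, add_zero, mul_one, map_one]
    at e0 e1 eI
  refine ⟨?_, ?_, by linear_combination -e0⟩
  · linear_combination (1 / 2) * e1 - (1 / 2) * e0 - (I / 2) * eI + (I / 2) * e0 +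
      (c * g.1 - c * (ρ g).1 + (ρ g).1 * d - d * conj (g.1 : ℂ)) / 2 * I_sq
  · linear_combination (1 / 2) * e1 - (1 / 2) * e0 + (I / 2) * eI - (I / 2) * e0 +
      (d * conj (g.1 : ℂ) - d * (ρ g).1 + (ρ g).1 * c - c * g.1) / 2 * I_sq

theorem IsGauge.eq_sub_im {ν μ B : ℝ} {τ : ℂ → ℂ} {φ : ℂ → ℝ} {s : ℂ}
    (hφ : IsGauge ν μ B τ φ) (hS : ∀ z, Sfun ν μ τ z = B * z + s) (w : ℂ) :
    φ w = φ 0 - (conj s * w).im := by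
  set ℓ : ℂ →L[ℝ] ℝ := imCLM.comp (conj s • ContinuousLinearMap.id ℝ ℂ)
  have hℓ (v : ℂ) : ℓ v = (conj s * v).im := by simp [ℓ]
  have hdφ (z : ℂ) : fderiv ℝ φ z = -ℓ := by
    refine ContinuousLinearMap.ext fun v => ofReal_injective <| mul_left_cancel₀ I_ne_zero ?_
    rw [hφ.2 z v, hS z, neg_apply, hℓ, ofReal_neg, im_eq_sub_conj]
    simp only [map_add, map_mul, conj_ofReal, conj_conj]
    field_simp
    ring
  have hφ_eq := eq_of_fderiv_eq (g := fun x => φ 0 - ℓ x) (hφ.1.differentiable (by simp))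
    (ℓ.differentiable.const_sub (φ 0))
    (fun z => by rw [hdφ, fderiv_const_sub, ℓ.fderiv]) 0 (by simp)
  simpa [hℓ] using congrFun hφ_eq w

theorem cexp_I_mul_sub_im (x : ℝ) (s w : ℂ) :
    cexp (I * ((x - (conj s * w).im : ℝ) : ℂ)) = cexp (I * x + -conj s / 2 * w + s / 2 * conj w) := by
  rw [ofReal_sub, im_eq_sub_conj]
  congr 1
  simp only [map_mul, conj_conj]
  field_simp
  ring

theorem jfac_eq (α : ℝ) (g : G1) (z : ℂ) :
    jfac α g z = cexp (I * (α * ((g.1 : ℂ) * conj g.2 * z).im : ℝ)) := by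
  have h : z * conj (Gact (Ginv g) 0) = -((g.1 : ℂ) * conj g.2 * z) := by
    simp only [Gact, Ginv, Circle.coe_inv_eq_conj, mul_zero, zero_add, map_neg, map_mul,
      conj_conj]
    ring
  rw [jfac, h, neg_im]
  push_cast
  ring_nf

theorem im_phase_of_coeff_relations {u u' b b' a c d : ℂ} (z : ℂ) (hc : c * u = u' * c)
    (hd : d * conj u = u' * d) (hu' : u' * conj u' = 1)
    (hb' : b' = a + c * b + d * conj b - u' * a) :
    (u' * conj b' * (c * z + d * conj z)).im =
      (‖c‖ ^ 2 - ‖d‖ ^ 2) * (u * conj b * z).im + ((c * conj a - conj d * a) * (u - 1) * z).im := by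
  have hX : u' * conj b' * (c * z + d * conj z) =
      c * conj a * u * z + c * conj c * u * conj b * z + c * conj d * u * b * z - conj a * c * z +
        d * conj a * conj u * conj z + conj c * d * conj u * conj b * conj z +
        d * conj d * conj u * b * conj z - conj a * d * conj z := by
    subst hb'
    simp only [map_add, map_sub, map_mul, conj_conj]
    linear_combination -(conj a * z + conj c * conj b * z + conj d * b * z) * hc -
      (conj a * conj z + conj c * conj b * conj z + conj d * b * conj z) * hd -
      conj a * (c * z + d * conj z) * hu'
  apply ofReal_injective
  push_cast
  simp only [im_eq_sub_conj, hX, ← mul_conj', map_add, map_sub, map_mul, conj_conj, map_one]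
  ring

theorem Circle.coe_mul_conj (u : Circle) : (u : ℂ) * conj (u : ℂ) = 1 := by
  rw [← Circle.coe_inv_eq_conj, ← Circle.coe_mul, mul_inv_cancel, Circle.coe_one]

theorem cexp_phase_mul_jfac_affine {ρ : G1 → G1} {a c d : ℂ} {ν μ B : ℝ} {φ : ℂ → ℝ}
    (hequiv : Equivariant ρ fun w => a + c * w + d * conj w)
    (hB : B = ν + μ * (‖c‖ ^ 2 - ‖d‖ ^ 2))
    (hφ : ∀ w, φ w = φ 0 - (conj (μ * (conj c * a - d * conj a)) * w).im) (g : G1) (z : ℂ) :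
    cexp (I * (φ (Gact g z) : ℝ)) *
        (jfac ν g z * jfac μ (ρ g) (a + c * z + d * conj z)) =
      cexp (I * ((φ (Gact g 0) - φ 0 : ℝ) : ℂ)) * jfac (ν - B) g 0 *
        jfac μ (ρ g) (a + c * 0 + d * conj 0) * jfac B g z * cexp (I * (φ z : ℝ)) := by
  obtain ⟨hc, hd, hb'⟩ := hequiv.affine_coeff_relations g
  have hphase := congrArg ((↑) : ℝ → ℂ)
    (im_phase_of_coeff_relations z hc hd (Circle.coe_mul_conj (ρ g).1) hb')
  simp only [jfac_eq, ← exp_add]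
  congr 1
  rw [hφ (Gact g z), hφ z, hφ (Gact g 0), hB]
  simp only [Gact, mul_zero, zero_add, map_zero, add_zero, ofReal_sub, ofReal_mul, ofReal_add,
    ofReal_pow, im_eq_sub_conj, map_add, map_sub, map_mul, map_one, conj_conj, conj_ofReal]
    at hphase ⊢
  linear_combination (I * μ) * hphase

theorem lifting_eigenspaces_general
    (Γ : Set G1)
    (ρ : G1 → G1) (τ : ℂ → ℂ) (hequiv : Equivariant ρ τ)
    (hτ : ContDiff ℝ (⊤ : ℕ∞) τ) (χ : G1 → Circle) (ν μ : ℝ)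
    (φ : ℂ → ℝ) (hφ : IsGauge ν μ (Bfield ν μ τ 0) τ φ)
    (lam : ℂ) (F : ℂ → ℂ) (hF : ContDiff ℝ (⊤ : ℕ∞) F) :
    ((∀ γ ∈ Γ, ∀ z : ℂ,
        F (Gact γ z) = (χ γ : ℂ) * jfac ν γ z * jfac μ (ρ γ) (τ z) * F z) ∧
      (∀ z : ℂ, DeltaTau ν μ τ F z = lam * F z)) ↔
      ((∀ γ ∈ Γ, ∀ z : ℂ,
        Complex.exp (Complex.I * ((φ (Gact γ z) : ℝ) : ℂ)) * F (Gact γ z) =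
          chiTau ν μ (Bfield ν μ τ 0) ρ τ φ χ γ * jfac (Bfield ν μ τ 0) γ z *
            (Complex.exp (Complex.I * ((φ z : ℝ) : ℂ)) * F z)) ∧
      (∀ z : ℂ,
        DeltaB (Bfield ν μ τ 0) (fun w => Complex.exp (Complex.I * ((φ w : ℝ) : ℂ)) * F w) z =
          lam * (Complex.exp (Complex.I * ((φ z : ℝ) : ℂ)) * F z))) := by
  obtain ⟨a, c, d, rfl⟩ := hequiv.exists_affine hτ.continuous
  set s : ℂ := μ * (conj c * a - d * conj a)
  have hS : Sfun ν μ (fun w => a + c * w + d * conj w) =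
      fun z => (Bfield ν μ (fun w => a + c * w + d * conj w) 0 : ℂ) * z + s :=
    funext fun z => Sfun_affine a c d ν μ
  have hφ_eq := hφ.eq_sub_im (congrFun hS)
  have hgauge : (fun w => cexp (I * (φ w : ℝ)) * F w) =
      fun w => cexp (I * (φ 0 : ℝ) + -conj s / 2 * w + s / 2 * conj w) * F w :=
    funext fun w => by rw [hφ_eq w, cexp_I_mul_sub_im]
  refine and_congr (forall₂_congr fun γ _ => forall_congr' fun z => ?_) (forall_congr' fun z => ?_)
  · have hcocycle := cexp_phase_mul_jfac_affine hequiv (Bfield_affine (z := 0) a c d ν μ) hφ_eq γ z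
    rw [← mul_right_inj' (exp_ne_zero (I * φ (Gact γ z))), chiTau]
    convert Iff.rfl using 2
    linear_combination (χ γ * F z : ℂ) * hcocycle.symm
  · rw [DeltaB_eq_magneticLaplacian, hgauge,
      magneticLaplacian_cexp_mul _ _ _ (hF.of_le (WithTop.coe_le_coe.2 le_top)),
      DeltaTau_affine, hS, congrFun hgauge z, mul_left_comm, mul_right_inj' (exp_ne_zero _)]

/-- `F` is a mixed automorphic eigenfunction of `Δ^{ν,μ}_τ` with
eigenvalue `λ` iff `G_F = e^{iφ} F` is a classical `(Γ,χ_τ)`-automorphic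
eigenfunction of the Landau Hamiltonian `Δ_B` with the same eigenvalue. -/
theorem lifting_eigenspaces
    (Γ : Set G1) (hone : ((1 : Circle), (0 : ℂ)) ∈ Γ)
    (hmul : ∀ g ∈ Γ, ∀ h ∈ Γ, Gmul g h ∈ Γ) (hinv : ∀ g ∈ Γ, Ginv g ∈ Γ)
    (ρ : G1 → G1) (τ : ℂ → ℂ) (hequiv : Equivariant ρ τ)
    (hρΓ : ∀ γ ∈ Γ, ρ γ ∈ Γ)
    (hτ : ContDiff ℝ (⊤ : ℕ∞) τ) (χ : G1 → Circle) (ν μ : ℝ)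
    (φ : ℂ → ℝ) (hφ : IsGauge ν μ (Bfield ν μ τ 0) τ φ)
    (lam : ℂ) (F : ℂ → ℂ) (hF : ContDiff ℝ (⊤ : ℕ∞) F) :
    ((∀ γ ∈ Γ, ∀ z : ℂ,
        F (Gact γ z) = (χ γ : ℂ) * jfac ν γ z * jfac μ (ρ γ) (τ z) * F z) ∧
      (∀ z : ℂ, DeltaTau ν μ τ F z = lam * F z)) ↔
      ((∀ γ ∈ Γ, ∀ z : ℂ,
        Complex.exp (Complex.I * ((φ (Gact γ z) : ℝ) : ℂ)) * F (Gact γ z) =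
          chiTau ν μ (Bfield ν μ τ 0) ρ τ φ χ γ * jfac (Bfield ν μ τ 0) γ z *
            (Complex.exp (Complex.I * ((φ z : ℝ) : ℂ)) * F z)) ∧
      (∀ z : ℂ,
        DeltaB (Bfield ν μ τ 0) (fun w => Complex.exp (Complex.I * ((φ w : ℝ) : ℂ)) * F w) z =
          lam * (Complex.exp (Complex.I * ((φ z : ℝ) : ℂ)) * F z))) :=
  lifting_eigenspaces_general Γ ρ τ hequiv hτ χ ν μ φ hφ lam F hF
end
end

section
/- Let (ρ,τ) be an equivariant pair with τ ℝ-differentiable, and write ρ(g) = [φ(g), ψ(g)] with φ(g) ∈ U(1), ψ(g) ∈ ℂ. Then for every g = [a,b] ∈ G and z ∈ ℂ: (∂τ/∂z)(g·z) = conj(a)·φ(g)·(∂τ/∂z)(z) and (∂τ/∂z̄)(g·z) = a·φ(g)·(∂τ/∂z̄)(z). -/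
open Complex MeasureTheory ComplexConjugate

noncomputable section

/-! Differentiating `τ (a * w + b) = φ(g) * τ w + ψ(g)` at `z` gives
`Dτ(g·z) ∘ (a * ·) = φ(g) • Dτ(z)`. Precomposing a real-linear map `ℂ → ℂ` with
multiplication by `a` multiplies its `ℂ`-linear part by `a` and its antilinear part by `ā`,
and `ā a = 1` on the unit circle. -/

namespace ContinuousLinearMap

lemma apply_eq_re_mul_add_im_mul (L : ℂ →L[ℝ] ℂ) (w : ℂ) :
    L w = w.re * L 1 + w.im * L I := by
  conv_lhs => rw [← re_add_im w, ← mul_one (w.re : ℂ), ← real_smul, ← real_smul]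
  rw [map_add, L.map_smul, L.map_smul, real_smul, real_smul]

lemma apply_sub_I_mul_apply_mul_I (L : ℂ →L[ℝ] ℂ) (a : ℂ) :
    L a - I * L (a * I) = a * (L 1 - I * L I) := by
  rw [L.apply_eq_re_mul_add_im_mul a, L.apply_eq_re_mul_add_im_mul (a * I)]
  conv_rhs => rw [← re_add_im a]
  simp only [mul_re, mul_im, I_re, I_im, mul_zero, mul_one, add_zero, zero_sub, ofReal_neg]
  linear_combination (a.im * L I) * I_sq

lemma apply_add_I_mul_apply_mul_I (L : ℂ →L[ℝ] ℂ) (a : ℂ) :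
    L a + I * L (a * I) = conj a * (L 1 + I * L I) := by
  rw [L.apply_eq_re_mul_add_im_mul a, L.apply_eq_re_mul_add_im_mul (a * I)]
  conv_rhs => rw [← re_add_im a]
  simp only [mul_re, mul_im, I_re, I_im, mul_zero, mul_one, add_zero, zero_sub, ofReal_neg,
    map_add, map_mul, conj_ofReal, conj_I]
  linear_combination (a.im * L I) * I_sq

end ContinuousLinearMap

section Wirtinger

variable {f : ℂ → ℂ} {z : ℂ}

lemma fderiv_comp_mul_add_apply (a b v : ℂ) (hf : DifferentiableAt ℝ f (a * z + b)) :
    fderiv ℝ (fun w => f (a * w + b)) z v = fderiv ℝ f (a * z + b) (a * v) := by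
  have hinner : HasFDerivAt (fun w : ℂ => a * w + b) (a • ContinuousLinearMap.id ℝ ℂ) z :=
    ((hasFDerivAt_id z).const_mul a).add_const b
  have hcomp : HasFDerivAt (fun w => f (a * w + b))
      ((fderiv ℝ f (a * z + b)).comp (a • ContinuousLinearMap.id ℝ ℂ)) z :=
    hf.hasFDerivAt.comp z hinner
  rw [hcomp.fderiv]
  simp

lemma wdz_comp_mul_add (a b : ℂ) (hf : DifferentiableAt ℝ f (a * z + b)) :
    wdz (fun w => f (a * w + b)) z = a * wdz f (a * z + b) := by
  simp only [wdz, fderiv_comp_mul_add_apply a b _ hf, mul_one,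
    ContinuousLinearMap.apply_sub_I_mul_apply_mul_I]
  ring

lemma wdzbar_comp_mul_add (a b : ℂ) (hf : DifferentiableAt ℝ f (a * z + b)) :
    wdzbar (fun w => f (a * w + b)) z = conj a * wdzbar f (a * z + b) := by
  simp only [wdzbar, fderiv_comp_mul_add_apply a b _ hf, mul_one,
    ContinuousLinearMap.apply_add_I_mul_apply_mul_I]
  ring

lemma wdz_const_mul_add (c d : ℂ) (hf : DifferentiableAt ℝ f z) :
    wdz (fun w => c * f w + d) z = c * wdz f z := by
  simp only [wdz, fderiv_add_const, fderiv_const_mul hf, smul_apply, smul_eq_mul]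
  ring

lemma wdzbar_const_mul_add (c d : ℂ) (hf : DifferentiableAt ℝ f z) :
    wdzbar (fun w => c * f w + d) z = c * wdzbar f z := by
  simp only [wdzbar, fderiv_add_const, fderiv_const_mul hf, smul_apply, smul_eq_mul]
  ring

end Wirtinger

lemma Circle.conj_coe_mul_coe (a : Circle) : conj (a : ℂ) * a = 1 := by
  rw [← coe_inv_eq_conj, ← coe_mul, inv_mul_cancel, coe_one]

/-- transformation rules of the Wirtinger derivatives of the
equivariant map `τ` under the action of `g = [a,b]`, with `ρ(g) = [φ(g), ψ(g)]`:
`∂τ/∂z(g·z) = ā φ(g) ∂τ/∂z(z)` and `∂τ/∂z̄(g·z) = a φ(g) ∂τ/∂z̄(z)`. -/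
theorem wirtinger_equivariance (ρ : G1 → G1) (τ : ℂ → ℂ) (hequiv : Equivariant ρ τ)
    (hτ : Differentiable ℝ τ) (g : G1) (z : ℂ) :
    wdz τ (Gact g z) = conj ((g.1 : ℂ)) * ((ρ g).1 : ℂ) * wdz τ z ∧
      wdzbar τ (Gact g z) = (g.1 : ℂ) * ((ρ g).1 : ℂ) * wdzbar τ z := by
  have hτ_comp : (fun w => τ (g.1 * w + g.2)) = fun w => (ρ g).1 * τ w + (ρ g).2 :=
    funext (hequiv.2 g)
  have hdz : g.1 * wdz τ (Gact g z) = (ρ g).1 * wdz τ z := by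
    rw [Gact, ← wdz_comp_mul_add _ _ (hτ _), hτ_comp, wdz_const_mul_add _ _ (hτ z)]
  have hdzbar : conj (g.1 : ℂ) * wdzbar τ (Gact g z) = (ρ g).1 * wdzbar τ z := by
    rw [Gact, ← wdzbar_comp_mul_add _ _ (hτ _), hτ_comp, wdzbar_const_mul_add _ _ (hτ z)]
  constructor
  · rw [mul_assoc, ← hdz, ← mul_assoc, g.1.conj_coe_mul_coe, one_mul]
  · rw [mul_assoc, ← hdzbar, ← mul_assoc, mul_comm (g.1 : ℂ), g.1.conj_coe_mul_coe, one_mul]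
end
end
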